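/- arXiv:1601.02231 — 2 statements merged into one kernel-verified Lean document; each statement's English description precedes it below -/
import Mathlib

section
/- For all integers $n \ge 2$ and $1 \le k \le n-1$, the constant $\gamma_{n,k} = \omega_n^{(n-k)/n}/\omega_{n-k}$ satisfies $e^{-k/2} < \gamma_{n,k} < 1$, where $\omega_m$ is the volume of the unit Euclidean ball in $\mathbb{R}^m$. -/
/-!
Write `m = n - k` and `H c = log Γ(c + 1) / c`. Since `ω_m = π^{m/2} / Γ(m/2 + 1)`, the powers of `π`
cancel and `log γ_{n,k} = (m/2) (H(m/2) - H(n/2))`, so the claim is `0 < H(n/2) - H(m/2) < k/m`.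
Both bounds telescope from the half-step bounds `H c < H (c + 1/2) < H c + 1/(2c)` at positive
half-integers `c`. These follow from log-convexity of `Γ` at midpoints (Wendel's inequalities)
together with the crude Stirling-type bounds `c log(c + 1) - c - 1/2 < log Γ(c + 1) < c log(c + 1/2)`,
which propagate along `c ↦ c + 1` by the functional equation.
-/

open MeasureTheory

noncomputable section

/-- `ω_m`: the volume of the unit Euclidean ball in `ℝ^m`. -/
def unitBallVol (m : ℕ) : ℝ :=
  (volume (Metric.ball (0 : EuclideanSpace ℝ (Fin m)) 1)).toReal

open Real

theorem log_Gamma_add_one {x : ℝ} (hx : 0 < x) :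
    log (Gamma (x + 1)) = log x + log (Gamma x) := by
  rw [Gamma_add_one hx.ne', log_mul hx.ne' (Gamma_pos_of_pos hx).ne']

theorem log_Gamma_midpoint_le {x y : ℝ} (hx : 0 < x) (hy : 0 < y) :
    log (Gamma ((x + y) / 2)) ≤ (log (Gamma x) + log (Gamma y)) / 2 := by
  have h := convexOn_log_Gamma.2 (Set.mem_Ioi.2 hx) (Set.mem_Ioi.2 hy)
    (by norm_num : (0 : ℝ) ≤ 1 / 2) (by norm_num : (0 : ℝ) ≤ 1 / 2) (by norm_num)
  simp only [Function.comp_apply, smul_eq_mul] at h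
  rw [show (x + y) / 2 = 1 / 2 * x + 1 / 2 * y by ring]
  linarith

theorem log_Gamma_add_half_le {x : ℝ} (hx : 0 < x) :
    log (Gamma (x + 1 / 2)) ≤ log (Gamma x) + log x / 2 := by
  have h := log_Gamma_midpoint_le hx (add_pos hx one_pos)
  rw [log_Gamma_add_one hx, show (x + (x + 1)) / 2 = x + 1 / 2 by ring] at h
  linarith

theorem log_Gamma_add_half_ge {x : ℝ} (hx : 1 / 2 < x) :
    log (Gamma x) + log (x - 1 / 2) / 2 ≤ log (Gamma (x + 1 / 2)) := by
  have hx' : 0 < x - 1 / 2 := by linarith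
  have h := log_Gamma_midpoint_le hx' (by linarith : 0 < x + 1 / 2)
  rw [show x + 1 / 2 = x - 1 / 2 + 1 by ring, log_Gamma_add_one hx'] at h ⊢
  rw [show (x - 1 / 2 + (x - 1 / 2 + 1)) / 2 = x by ring] at h
  linarith

theorem half_nat_induction {P : ℝ → Prop} (half : P (1 / 2)) (one : P 1)
    (step : ∀ c : ℝ, 0 < c → P c → P (c + 1)) : ∀ m : ℕ, 0 < m → P (m / 2)
  | 1, _ => by simpa using half
  | 2, _ => by simpa using one
  | m + 3, _ => by
    have h := step _ (by positivity) (half_nat_induction half one step (m + 1) m.succ_pos)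
    convert h using 2
    push_cast
    ring

theorem mul_log_sub_lt_log_Gamma_half_nat_add_one {m : ℕ} (hm : 0 < m) :
    (m / 2 : ℝ) * log (m / 2 + 1) - m / 2 - 1 / 2 < log (Gamma (m / 2 + 1)) := by
  refine half_nat_induction (P := fun c => c * log (c + 1) - c - 1 / 2 < log (Gamma (c + 1)))
    ?_ ?_ ?_ m hm
  · have hΓ : Gamma (1 / 2 + 1) = √π / 2 := by
      rw [Gamma_add_one (by norm_num), Gamma_one_half_eq]; ring
    have hπ : 0 < log π := log_pos (by linarith [pi_gt_three])
    have hlog : log (1 / 2 + 1) ≤ 1 / 2 := by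
      linarith [log_le_sub_one_of_pos (x := 1 / 2 + 1) (by norm_num)]
    rw [hΓ, log_div (by positivity) two_ne_zero, log_sqrt pi_pos.le]
    linarith [log_two_lt_d9]
  · norm_num
    linarith [log_two_lt_d9]
  · intro c hc h
    have hstep : log (c + 1 + 1) - log (c + 1) ≤ 1 / (c + 1) := by
      rw [← log_div (by linarith) (by linarith)]
      have := log_le_sub_one_of_pos (x := (c + 1 + 1) / (c + 1)) (by positivity)
      rwa [show (c + 1 + 1) / (c + 1) - 1 = 1 / (c + 1) by field_simp; ring] at this
    have : (c + 1) * (log (c + 1 + 1) - log (c + 1)) ≤ 1 := by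
      calc _ ≤ (c + 1) * (1 / (c + 1)) := by gcongr
        _ = 1 := by field_simp
    rw [log_Gamma_add_one (by linarith)]
    nlinarith

theorem log_Gamma_half_nat_add_one_lt {m : ℕ} (hm : 0 < m) :
    log (Gamma (m / 2 + 1)) < (m / 2 : ℝ) * log (m / 2 + 1 / 2) := by
  refine half_nat_induction (P := fun c => log (Gamma (c + 1)) < c * log (c + 1 / 2))
    ?_ ?_ ?_ m hm
  · have := Gamma_three_div_two_lt_one
    norm_num
    exact log_neg (Gamma_pos_of_pos (by norm_num)) this
  · norm_num
    exact log_pos (by norm_num)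
  · intro c hc h
    rw [log_Gamma_add_one (by linarith)]
    have h1 : log (c + 1) ≤ log (c + 1 + 1 / 2) := log_le_log (by linarith) (by linarith)
    have h2 : log (c + 1 / 2) ≤ log (c + 1 + 1 / 2) := log_le_log (by linarith) (by linarith)
    nlinarith

def gammaSlope (c : ℝ) : ℝ := log (Gamma (c + 1)) / c

theorem gammaSlope_lt_gammaSlope_add_half {c : ℝ} (hc : 0 < c)
    (h : log (Gamma (c + 1)) < c * log (c + 1 / 2)) :
    gammaSlope c < gammaSlope (c + 1 / 2) := by
  have hW := log_Gamma_add_half_ge (x := c + 1) (by linarith)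
  rw [show c + 1 + 1 / 2 = c + 1 / 2 + 1 by ring, show c + 1 - 1 / 2 = c + 1 / 2 by ring] at hW
  rw [gammaSlope, gammaSlope, div_lt_div_iff₀ hc (by linarith)]
  nlinarith

theorem gammaSlope_add_half_lt {c : ℝ} (hc : 0 < c)
    (h : c * log (c + 1) - c - 1 / 2 < log (Gamma (c + 1))) :
    gammaSlope (c + 1 / 2) < gammaSlope c + 1 / (2 * c) := by
  have hW := log_Gamma_add_half_le (x := c + 1) (by linarith)
  rw [show c + 1 + 1 / 2 = c + 1 / 2 + 1 by ring] at hW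
  have hRHS : log (Gamma (c + 1)) / c + 1 / (2 * c) = (log (Gamma (c + 1)) + 1 / 2) / c := by
    field_simp
  rw [gammaSlope, gammaSlope, hRHS, div_lt_div_iff₀ (by linarith) hc]
  nlinarith [mul_le_mul_of_nonneg_left hW hc.le]

theorem gammaSlope_half_nat_succ {m : ℕ} (hm : 0 < m) :
    gammaSlope (m / 2) < gammaSlope ((m + 1 : ℕ) / 2) ∧
      gammaSlope ((m + 1 : ℕ) / 2) < gammaSlope (m / 2) + 1 / m := by
  have hc : (0 : ℝ) < m / 2 := by positivity
  rw [show ((m + 1 : ℕ) : ℝ) / 2 = m / 2 + 1 / 2 by push_cast; ring]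
  refine ⟨gammaSlope_lt_gammaSlope_add_half hc (log_Gamma_half_nat_add_one_lt hm), ?_⟩
  convert gammaSlope_add_half_lt hc (mul_log_sub_lt_log_Gamma_half_nat_add_one hm) using 3
  ring

theorem lt_and_lt_add_div_of_succ_bounds {u : ℕ → ℝ} {m : ℕ} (hm : 0 < m)
    (h : ∀ j, m ≤ j → u j < u (j + 1) ∧ u (j + 1) < u j + 1 / j) {k : ℕ} (hk : 0 < k) :
    u m < u (m + k) ∧ u (m + k) < u m + k / m := by
  induction k, hk using Nat.le_induction with
  | base => simpa using h m le_rfl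
  | succ k hk ih =>
    obtain ⟨hinc, hbound⟩ := h (m + k) (by omega)
    have hle : 1 / ((m + k : ℕ) : ℝ) ≤ 1 / m := by
      gcongr
      omega
    rw [← add_assoc]
    push_cast at hbound hle ⊢
    constructor
    · linarith [ih.1]
    · rw [add_div]
      linarith [ih.2]

theorem unitBallVol_eq_exp {m : ℕ} (hm : 0 < m) :
    unitBallVol m = exp (m / 2 * (log π - gammaSlope (m / 2))) := by
  have : Nonempty (Fin m) := Fin.pos_iff_nonempty.mp hm
  have hΓ : 0 < Gamma (m / 2 + 1) := Gamma_pos_of_pos (by positivity)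
  rw [unitBallVol, EuclideanSpace.volume_ball, Fintype.card_fin, ENNReal.ofReal_one, one_pow,
    one_mul, ENNReal.toReal_ofReal (by positivity), gammaSlope, mul_sub,
    mul_div_cancel₀ _ (by positivity), exp_sub, exp_log hΓ, sqrt_eq_rpow, ← rpow_natCast,
    ← rpow_mul pi_pos.le, rpow_def_of_pos pi_pos]
  ring_nf

theorem unitBallVol_rpow_div_unitBallVol {m n : ℕ} (hm : 0 < m) (hmn : m ≤ n) :
    unitBallVol n ^ ((m : ℝ) / n) / unitBallVol m =
      exp (m / 2 * (gammaSlope (m / 2) - gammaSlope (n / 2))) := by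
  have hn : (0 : ℝ) < n := by exact_mod_cast hm.trans_le hmn
  rw [unitBallVol_eq_exp hm, unitBallVol_eq_exp (hm.trans_le hmn), ← exp_mul, ← exp_sub]
  congr 1
  field_simp
  ring

theorem gamma_bounds_general {n k : ℕ} (hk : 1 ≤ k) (hkn : k ≤ n - 1) :
    Real.exp (-(k : ℝ) / 2)
        < unitBallVol n ^ (((n : ℝ) - k) / n) / unitBallVol (n - k) ∧
      unitBallVol n ^ (((n : ℝ) - k) / n) / unitBallVol (n - k) < 1 := by
  obtain ⟨m, hm, rfl⟩ : ∃ m, 0 < m ∧ n = m + k := ⟨n - k, by omega, by omega⟩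
  obtain ⟨hmono, hbound⟩ := lt_and_lt_add_div_of_succ_bounds (u := fun j ↦ gammaSlope (j / 2)) hm
    (fun j hj ↦ gammaSlope_half_nat_succ (hm.trans_le hj)) hk
  rw [show ((m + k : ℕ) : ℝ) - k = m by push_cast; ring, Nat.add_sub_cancel,
    unitBallVol_rpow_div_unitBallVol hm (by omega)]
  refine ⟨exp_lt_exp.2 ?_, exp_lt_one_iff.2 ?_⟩
  · have := mul_lt_mul_of_pos_left hbound (by positivity : (0 : ℝ) < m / 2)
    rw [mul_add, show (m : ℝ) / 2 * (k / m) = k / 2 by field_simp] at this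
    linarith
  · have := mul_lt_mul_of_pos_left hmono (by positivity : (0 : ℝ) < m / 2)
    linarith

/-- `e^{-k/2} < γ_{n,k} = ω_n^{(n-k)/n}/ω_{n-k} < 1`. -/
theorem gamma_bounds {n k : ℕ} (hn : 2 ≤ n) (hk : 1 ≤ k) (hkn : k ≤ n - 1) :
    Real.exp (-(k : ℝ) / 2)
        < unitBallVol n ^ (((n : ℝ) - k) / n) / unitBallVol (n - k) ∧
      unitBallVol n ^ (((n : ℝ) - k) / n) / unitBallVol (n - k) < 1 :=
  gamma_bounds_general hk hkn
end
end

section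
/- For all integers $n \ge 2$ and $1 \le k \le n-1$, one has $\omega_{n-k}^n / \omega_n^{n-k} \le e^{kn/2}$, where $\omega_m$ is the volume of the unit Euclidean ball in $\mathbb{R}^m$. -/
/-!
Writing `a = n/2` and `b = (n-k)/2`, the ratio is `Γ(a+1)^{2b} / Γ(b+1)^{2a}`, so it suffices to show
`b log Γ(a+1) - a log Γ(b+1) ≤ a (a - b)`. Log-convexity of `Γ` bounds the increment
`log Γ(a+1) - log Γ(b+1)` by `(a-b) log(a+1)`, and the Stirling-type bound
`log Γ(b+1) ≥ b (log(b+1) - 1)`, proved at half-integers by induction from the functional equation,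
controls the remaining term; `log(a+1) - log(b+1) ≤ (a-b)/(b+1)` then closes the estimate.
-/

open MeasureTheory

noncomputable section

open Real

lemma unitBallVol_eq {m : ℕ} (hm : m ≠ 0) :
    unitBallVol m = √π ^ m / Gamma (m / 2 + 1) := by
  have : Nonempty (Fin m) := ⟨⟨0, Nat.pos_of_ne_zero hm⟩⟩
  rw [unitBallVol, EuclideanSpace.volume_ball, Fintype.card_fin, ENNReal.ofReal_one, one_pow,
    one_mul, ENNReal.toReal_ofReal (by positivity)]

lemma unitBallVol_pow_div_unitBallVol_pow {m n : ℕ} (hm : m ≠ 0) (hn : n ≠ 0) :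
    unitBallVol m ^ n / unitBallVol n ^ m = Gamma (n / 2 + 1) ^ m / Gamma (m / 2 + 1) ^ n := by
  have hπ : √π ^ (m * n) ≠ 0 := by positivity
  rw [unitBallVol_eq hm, unitBallVol_eq hn, div_pow, div_pow, ← pow_mul, ← pow_mul,
    Nat.mul_comm n m, div_div_div_comm, div_self hπ, one_div_div]

namespace Real

lemma mul_log_sub_one_le_log_Gamma_succ {x : ℝ} (hx : -1 < x)
    (h : x * (log (x + 1) - 1) ≤ log (Gamma (x + 1))) :
    (x + 1) * (log (x + 1 + 1) - 1) ≤ log (Gamma (x + 1 + 1)) := by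
  have hx1 : 0 < x + 1 := by linarith
  have hlog : log (x + 1 + 1) - log (x + 1) ≤ 1 / (x + 1) := by
    rw [← log_div (by positivity) hx1.ne']
    convert log_le_sub_one_of_pos (by positivity : 0 < (x + 1 + 1) / (x + 1)) using 1
    field_simp
    ring
  rw [Gamma_add_one hx1.ne', log_mul hx1.ne' (Gamma_pos_of_pos hx1).ne']
  have := (le_div_iff₀' hx1).mp hlog
  linarith

lemma half_nat_mul_log_sub_one_le_log_Gamma (m : ℕ) :
    (m / 2 : ℝ) * (log (m / 2 + 1) - 1) ≤ log (Gamma (m / 2 + 1)) := by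
  induction m using Nat.twoStepInduction with
  | zero => simp
  | one =>
    have hG : Gamma (1 / 2 + 1) = √π / 2 := by
      rw [Gamma_add_one (by norm_num), Gamma_one_half_eq]
      ring
    -- `log (3/2) - 1 ≤ log (π/4)` amounts to `6/π ≤ e`, and already `log (6/π) ≤ 6/π - 1 ≤ 1`.
    have h6π : log (6 / π) ≤ 1 := by
      have := log_le_sub_one_of_pos (by positivity : 0 < 6 / π)
      have : 6 / π ≤ 2 := by rw [div_le_iff₀ pi_pos]; linarith [pi_gt_three]
      linarith
    rw [Nat.cast_one, hG, log_div (by positivity) two_ne_zero, log_sqrt pi_pos.le]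
    rw [log_div (by norm_num) pi_pos.ne'] at h6π
    have h6 : log 6 = log (1 / 2 + 1) + log 2 + log 2 := by
      rw [← log_mul (by norm_num) two_ne_zero, ← log_mul (by norm_num) two_ne_zero]
      norm_num
    linarith
  | more j ih _ =>
    have hcast : ((j + 2 : ℕ) : ℝ) / 2 = j / 2 + 1 := by push_cast; ring
    rw [hcast]
    exact mul_log_sub_one_le_log_Gamma_succ (by linarith [(by positivity : (0 : ℝ) ≤ j / 2)]) ih

lemma log_Gamma_sub_log_Gamma_le {s t : ℝ} (hs : 0 < s) (hst : s ≤ t) :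
    log (Gamma t) - log (Gamma s) ≤ (t - s) * log t := by
  rcases hst.eq_or_lt with rfl | hlt
  · simp
  have ht : 0 < t := hs.trans hlt
  have hslope := convexOn_log_Gamma.slope_mono_adjacent (Set.mem_Ioi.mpr hs)
    (Set.mem_Ioi.mpr (by linarith : (0 : ℝ) < t + 1)) hlt (lt_add_one t)
  simp only [Function.comp_apply, Gamma_add_one ht.ne',
    log_mul ht.ne' (Gamma_pos_of_pos ht).ne', add_sub_cancel_left, add_sub_cancel_right,
    div_one] at hslope
  exact (div_le_iff₀' (sub_pos.mpr hlt)).mp hslope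

lemma mul_log_Gamma_sub_mul_log_Gamma_le {a b : ℝ} (hb : 0 < b) (hba : b ≤ a)
    (hstirling : b * (log (b + 1) - 1) ≤ log (Gamma (b + 1))) :
    b * log (Gamma (a + 1)) - a * log (Gamma (b + 1)) ≤ a * (a - b) := by
  have hb1 : 0 < b + 1 := by linarith
  have ha1 : 0 < a + 1 := by linarith
  have hconv := log_Gamma_sub_log_Gamma_le hb1 (by linarith : b + 1 ≤ a + 1)
  have hlog : log (a + 1) - log (b + 1) ≤ (a - b) / (b + 1) := by
    rw [← log_div ha1.ne' hb1.ne']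
    convert log_le_sub_one_of_pos (div_pos ha1 hb1) using 1
    field_simp
    ring
  have hlog' := (le_div_iff₀ hb1).mp hlog
  have hab : 0 ≤ a - b := sub_nonneg.mpr hba
  calc b * log (Gamma (a + 1)) - a * log (Gamma (b + 1))
      = b * (log (Gamma (a + 1)) - log (Gamma (b + 1))) - (a - b) * log (Gamma (b + 1)) := by ring
    _ ≤ b * ((a - b) * log (a + 1)) - (a - b) * (b * (log (b + 1) - 1)) := by
      gcongr
      simpa only [add_sub_add_right_eq_sub] using hconv
    _ = (a - b) * (b * (log (a + 1) - log (b + 1)) + b) := by ring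
    _ ≤ (a - b) * a := by
      gcongr
      nlinarith
    _ = a * (a - b) := by ring

end Real

theorem omega_ratio_bound_general {n k : ℕ} (hk : 1 ≤ k) (hkn : k ≤ n - 1) :
    unitBallVol (n - k) ^ n / unitBallVol n ^ (n - k) ≤ Real.exp ((k : ℝ) * n / 2) := by
  have hm : n - k ≠ 0 := by omega
  have hn : n ≠ 0 := by omega
  have hcast : ((n - k : ℕ) : ℝ) = n - k := Nat.cast_sub (by omega)
  have hkey := mul_log_Gamma_sub_mul_log_Gamma_le (a := n / 2)
    (by positivity : (0 : ℝ) < (n - k : ℕ) / 2) (by rw [hcast]; linarith [Nat.cast_nonneg (α := ℝ) k])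
    (half_nat_mul_log_sub_one_le_log_Gamma (n - k))
  rw [unitBallVol_pow_div_unitBallVol_pow hm hn, ← log_le_iff_le_exp (by positivity),
    log_div (by positivity) (by positivity), log_pow, log_pow]
  rw [hcast] at hkey ⊢
  linarith

/-- `ω_{n-k}^n / ω_n^{n-k} ≤ e^{kn/2}`. -/
theorem omega_ratio_bound {n k : ℕ} (hn : 2 ≤ n) (hk : 1 ≤ k) (hkn : k ≤ n - 1) :
    unitBallVol (n - k) ^ n / unitBallVol n ^ (n - k) ≤ Real.exp ((k : ℝ) * n / 2) :=
  omega_ratio_bound_general hk hkn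
end
end
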